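/- arXiv:2304.09846 — 2 statements merged into one kernel-verified Lean document; each statement's English description precedes it below -/
import Mathlib

section
/- Let D be a projector, Π₀ and Π₁ be mutually orthogonal projectors on a finite-dimensional complex Hilbert space, and let |ψ⟩ be a unit vector in the image of Π₀ + Π₁. Then ‖Π₁ D Π₀ |ψ⟩‖² + ‖Π₀ D Π₁ |ψ⟩‖² ≥ (1/2)·(‖D|ψ⟩‖² − (‖D Π₀ |ψ⟩‖² + ‖D Π₁ |ψ⟩‖²))². -/
/-!
Write `a = Π₀ψ`, `b = Π₁ψ`, so `ψ = a + b` and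
`‖Dψ‖² - ‖Da‖² - ‖Db‖² = 2 Re z` with `z = ⟪Da, Db⟫ = ⟪a, Db⟫`. Since `a = Π₀a` and `b = Π₁b`,
`z = ⟪a, Π₀Db⟫ = ⟪Π₁Da, b⟫`, and `a`, `b` have norm at most one, so `|z|` is bounded both by
`‖Π₀DΠ₁ψ‖` and by `‖Π₁DΠ₀ψ‖`. Hence `(2 Re z)² / 2 ≤ 2|z|² ≤ ‖Π₁DΠ₀ψ‖² + ‖Π₀DΠ₁ψ‖²`.
-/

open scoped InnerProductSpace

namespace LinearMap

variable {𝕜 E : Type*} [RCLike 𝕜] [NormedAddCommGroup E] [InnerProductSpace 𝕜 E]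

theorem IsSymmetricProjection.of_adjoint_eq [FiniteDimensional 𝕜 E] {T : E →ₗ[𝕜] E}
    (h_adj : T.adjoint = T) (h_idem : T ∘ₗ T = T) : T.IsSymmetricProjection where
  isIdempotentElem := h_idem
  isSymmetric := (isSymmetric_iff_isSelfAdjoint T).2 (isSelfAdjoint_iff'.2 h_adj)

namespace IsSymmetricProjection

variable {T : E →ₗ[𝕜] E} (hT : T.IsSymmetricProjection)
include hT

theorem apply_apply (x : E) : T (T x) = T x :=
  congr($hT.isIdempotentElem.eq x)

theorem norm_apply_le (x : E) : ‖T x‖ ≤ ‖x‖ := by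
  obtain ⟨U, _, rfl⟩ := isSymmetricProjection_iff_eq_coe_starProjection.mp hT
  exact U.norm_starProjection_apply_le x

theorem inner_apply_apply (x y : E) : ⟪T x, T y⟫_𝕜 = ⟪x, T y⟫_𝕜 := by
  rw [hT.isSymmetric, hT.apply_apply]

end IsSymmetricProjection

theorem IsSymmetricProjection.norm_inner_apply_apply_le {D P : E →ₗ[𝕜] E}
    (hD : D.IsSymmetricProjection) (hP : P.IsSymmetric) {a : E} (ha : P a = a) (ha_le : ‖a‖ ≤ 1)
    (b : E) : ‖⟪D a, D b⟫_𝕜‖ ≤ ‖P (D b)‖ :=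
  calc ‖⟪D a, D b⟫_𝕜‖ = ‖⟪a, P (D b)⟫_𝕜‖ := by rw [hD.inner_apply_apply, ← hP, ha]
    _ ≤ ‖a‖ * ‖P (D b)‖ := norm_inner_le_norm _ _
    _ ≤ ‖P (D b)‖ := mul_le_of_le_one_left (norm_nonneg _) ha_le

end LinearMap

open LinearMap

theorem stmt_0_general {H : Type*} [NormedAddCommGroup H] [InnerProductSpace ℂ H]
    [FiniteDimensional ℂ H]
    (D P0 P1 : H →ₗ[ℂ] H)
    (hD_adj : LinearMap.adjoint D = D) (hD_idem : D ∘ₗ D = D)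
    (hP0_adj : LinearMap.adjoint P0 = P0) (hP0_idem : P0 ∘ₗ P0 = P0)
    (hP1_adj : LinearMap.adjoint P1 = P1) (hP1_idem : P1 ∘ₗ P1 = P1)
    (ψ : H) (hψ : ‖ψ‖ = 1) (hmem : (P0 + P1) ψ = ψ) :
    ‖P1 (D (P0 ψ))‖ ^ 2 + ‖P0 (D (P1 ψ))‖ ^ 2 ≥
      (1 / 2) * (‖D ψ‖ ^ 2 - (‖D (P0 ψ)‖ ^ 2 + ‖D (P1 ψ)‖ ^ 2)) ^ 2 := by
  have hD := IsSymmetricProjection.of_adjoint_eq hD_adj hD_idem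
  have hP0 := IsSymmetricProjection.of_adjoint_eq hP0_adj hP0_idem
  have hP1 := IsSymmetricProjection.of_adjoint_eq hP1_adj hP1_idem
  set z := ⟪D (P0 ψ), D (P1 ψ)⟫_ℂ
  have hgap : ‖D ψ‖ ^ 2 - (‖D (P0 ψ)‖ ^ 2 + ‖D (P1 ψ)‖ ^ 2) = 2 * z.re := by
    nth_rw 1 [← hmem]
    rw [LinearMap.add_apply, map_add, norm_add_sq (𝕜 := ℂ)]
    simp only [z, RCLike.re_to_complex]
    ring
  have hz0 : ‖z‖ ≤ ‖P0 (D (P1 ψ))‖ :=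
    hD.norm_inner_apply_apply_le hP0.isSymmetric (hP0.apply_apply ψ)
      (hψ ▸ hP0.norm_apply_le ψ) _
  have hz1 : ‖z‖ ≤ ‖P1 (D (P0 ψ))‖ := by
    rw [← norm_inner_symm]
    exact hD.norm_inner_apply_apply_le hP1.isSymmetric (hP1.apply_apply ψ)
      (hψ ▸ hP1.norm_apply_le ψ) _
  have hre : z.re ^ 2 ≤ ‖z‖ ^ 2 := by
    rw [← sq_abs]
    exact pow_le_pow_left₀ (abs_nonneg _) (Complex.abs_re_le_norm z) 2
  rw [hgap]
  nlinarith [pow_le_pow_left₀ (norm_nonneg z) hz0 2, pow_le_pow_left₀ (norm_nonneg z) hz1 2]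

/-- Distinguishing implies Mapping: `D`, `P0`, `P1` projectors (Hermitian idempotents),
`P0`, `P1` mutually orthogonal, `ψ` a unit vector in the image of `P0 + P1`. -/
theorem stmt_0 {H : Type*} [NormedAddCommGroup H] [InnerProductSpace ℂ H]
    [FiniteDimensional ℂ H]
    (D P0 P1 : H →ₗ[ℂ] H)
    (hD_adj : LinearMap.adjoint D = D) (hD_idem : D ∘ₗ D = D)
    (hP0_adj : LinearMap.adjoint P0 = P0) (hP0_idem : P0 ∘ₗ P0 = P0)
    (hP1_adj : LinearMap.adjoint P1 = P1) (hP1_idem : P1 ∘ₗ P1 = P1)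
    (horth : P0 ∘ₗ P1 = 0)
    (ψ : H) (hψ : ‖ψ‖ = 1) (hmem : (P0 + P1) ψ = ψ) :
    ‖P1 (D (P0 ψ))‖ ^ 2 + ‖P0 (D (P1 ψ))‖ ^ 2 ≥
      (1 / 2) * (‖D ψ‖ ^ 2 - (‖D (P0 ψ)‖ ^ 2 + ‖D (P1 ψ)‖ ^ 2)) ^ 2 :=
  stmt_0_general D P0 P1 hD_adj hD_idem hP0_adj hP0_idem hP1_adj hP1_idem ψ hψ hmem
end

section
/- Let ρ be a density matrix and Π a projector on a finite-dimensional complex Hilbert space with Tr(Πρ) ≥ 1 − δ for some δ ∈ [0,1]. Define ρ' = ΠρΠ / Tr(Πρ). Then the trace distance TD(ρ, ρ') ≤ 2√δ. -/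
/-!
Let `Δ = ρ - ρ'` and let `U` be the sign of `Δ`, a unitary with `UΔ = |Δ|`, so that
`2 TD(ρ, ρ') = Re Tr(UΔ)`. With `Q = 1 - P` and `p = Tr(Pρ)`,
`Δ = QρQ + QρP + PρQ + (1 - 1/p) PρP`, and Cauchy–Schwarz for the semi-inner product
`⟨X, Y⟩ = Tr(Y ρ Xᴴ)` gives `|Tr(U A ρ B)| ≤ √Tr(Aρ) √Tr(Bρ)` for projections `A`, `B`.
Summing the four terms, `2 TD(ρ, ρ') ≤ 2(1 - p) + 2√(p(1 - p)) ≤ 4√(1 - p) ≤ 4√δ`.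
-/

open Matrix ComplexOrder

/-- Trace distance of two matrices: `(1/2) Tr √((ρ−σ)ᴴ(ρ−σ))`. -/
noncomputable def traceDist {m : Type*} [Fintype m] [DecidableEq m]
    (ρ σ : Matrix m m ℂ) : ℝ :=
  (((Matrix.posSemidef_conjTranspose_mul_self (ρ - σ)).1.eigenvectorUnitary : Matrix m m ℂ) *
      diagonal (((↑) : ℝ → ℂ) ∘ (Real.sqrt ·) ∘ (Matrix.posSemidef_conjTranspose_mul_self (ρ - σ)).1.eigenvalues) *
      (star ((Matrix.posSemidef_conjTranspose_mul_self (ρ - σ)).1.eigenvectorUnitary : Matrix m m ℂ))).trace.re / 2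

lemma abs_one_sub_inv_mul_le {p : ℝ} (hp : 0 ≤ p) (hp1 : p ≤ 1) : |1 - p⁻¹| * p ≤ 1 - p := by
  rcases hp.eq_or_lt with rfl | hp
  · simp
  · calc |1 - p⁻¹| * p = |(1 - p⁻¹) * p| := by rw [abs_mul, abs_of_pos hp]
      _ = |p - 1| := by rw [sub_mul, one_mul, inv_mul_cancel₀ hp.ne']
      _ ≤ 1 - p := by rw [abs_of_nonpos (by linarith)]; linarith

namespace Matrix

variable {n 𝕜 : Type*} [Fintype n] [RCLike 𝕜] {ρ : Matrix n n 𝕜}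

lemma PosSemidef.norm_trace_mul_mul_conjTranspose_le (hρ : ρ.PosSemidef) (x y : Matrix n n 𝕜) :
    ‖(y * ρ * xᴴ).trace‖ ≤
      √(RCLike.re (x * ρ * xᴴ).trace) * √(RCLike.re (y * ρ * yᴴ).trace) := by
  let _ := ρ.toMatrixSeminormedAddCommGroup hρ
  let _ := ρ.toMatrixInnerProductSpace hρ
  exact norm_inner_le_norm (𝕜 := 𝕜) x y

lemma IsStarProjection.trace_mul_mul_self {P : Matrix n n 𝕜} (hP : IsStarProjection P)
    (A : Matrix n n 𝕜) : (P * A * P).trace = (P * A).trace := by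
  rw [trace_mul_cycle, hP.isIdempotentElem.eq]

lemma IsStarProjection.trace_mul_nonneg {P : Matrix n n 𝕜} (hP : IsStarProjection P)
    (hρ : ρ.PosSemidef) : 0 ≤ (P * ρ).trace := by
  have hP' : Pᴴ = P := hP.isSelfAdjoint
  rw [← hP.trace_mul_mul_self]
  simpa only [hP'] using (hρ.mul_mul_conjTranspose_same P).trace_nonneg

variable [DecidableEq n]

lemma PosSemidef.norm_trace_mul_projection_mul_le (hρ : ρ.PosSemidef) {U P₁ P₂ : Matrix n n 𝕜}
    (hU : Uᴴ * U = 1) (hP₁ : IsStarProjection P₁) (hP₂ : IsStarProjection P₂) :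
    ‖(U * (P₁ * ρ * P₂)).trace‖ ≤
      √(RCLike.re (P₁ * ρ).trace) * √(RCLike.re (P₂ * ρ).trace) := by
  have hP₁' : P₁ᴴ = P₁ := hP₁.isSelfAdjoint
  have hP₂' : P₂ᴴ = P₂ := hP₂.isSelfAdjoint
  have hcs := hρ.norm_trace_mul_mul_conjTranspose_le P₂ (U * P₁)
  have hU_tr : (U * P₁ * ρ * (U * P₁)ᴴ).trace = (P₁ * ρ).trace := by
    rw [conjTranspose_mul, hP₁', trace_mul_comm]
    simp only [mul_assoc]
    rw [← mul_assoc Uᴴ, hU, one_mul, ← mul_assoc, hP₁.isIdempotentElem.eq]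
  rw [hP₂', hP₂.trace_mul_mul_self, hU_tr] at hcs
  calc _ = ‖(U * P₁ * ρ * P₂).trace‖ := by simp only [mul_assoc]
    _ ≤ _ := hcs.trans_eq (mul_comm _ _)

lemma IsHermitian.cfc_sqrt_conjTranspose_mul_self {A : Matrix n n 𝕜} (hA : A.IsHermitian) :
    cfc Real.sqrt (Aᴴ * A) = cfc (fun x : ℝ => |x|) A := by
  rw [hA.eq, ← sq, ← cfc_comp_pow Real.sqrt 2 A ((A.finite_real_spectrum.image _).continuousOn _)]
  exact cfc_congr fun x _ => Real.sqrt_sq_eq_abs x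

lemma IsHermitian.exists_mul_eq_cfc_abs {A : Matrix n n 𝕜} (hA : A.IsHermitian) :
    ∃ M : Matrix n n 𝕜, Mᴴ * M = 1 ∧ M * A = cfc (fun x : ℝ => |x|) A := by
  have hcont (f : ℝ → ℝ) : ContinuousOn f (spectrum ℝ A) := A.finite_real_spectrum.continuousOn f
  let s : ℝ → ℝ := fun x => if x < 0 then -1 else 1
  refine ⟨cfc s A, ?_, ?_⟩
  · rw [← star_eq_conjTranspose, ← cfc_star, ← cfc_mul _ _ _ (hcont _) (hcont _), ← cfc_one ℝ A]
    refine cfc_congr fun x _ => ?_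
    by_cases hx : x < 0 <;> simp [s, hx]
  · conv_lhs => arg 2; rw [← cfc_id' ℝ A]
    rw [← cfc_mul _ _ _ (hcont _) (hcont _)]
    refine cfc_congr fun x _ => ?_
    by_cases hx : x < 0
    · simp [s, hx, abs_of_neg hx]
    · simp [s, hx, abs_of_nonneg (not_lt.mp hx)]

lemma re_trace_mul_sub_inv_smul_le (hρ : ρ.PosSemidef) (hρtr : ρ.trace = 1) {P U : Matrix n n 𝕜}
    (hP : IsStarProjection P) (hU : Uᴴ * U = 1) {p : ℝ} (hp : (P * ρ).trace = p) :
    RCLike.re (U * (ρ - (p : 𝕜)⁻¹ • (P * ρ * P))).trace ≤ 4 * √(1 - p) := by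
  set Q := 1 - P with hQ_def
  have hQ : IsStarProjection Q := hP.one_sub
  have hq : (Q * ρ).trace = ((1 - p : ℝ) : 𝕜) := by
    rw [hQ_def, sub_mul, one_mul, trace_sub, hρtr, hp]; push_cast; rfl
  have hp0 : 0 ≤ p := RCLike.ofReal_nonneg.mp (hp ▸ hP.trace_mul_nonneg hρ)
  have hq0 : 0 ≤ 1 - p := RCLike.ofReal_nonneg.mp (hq ▸ hQ.trace_mul_nonneg hρ)
  have hsplit : ρ - (p : 𝕜)⁻¹ • (P * ρ * P) =
      Q * ρ * Q + Q * ρ * P + P * ρ * Q + (1 - (p : 𝕜)⁻¹) • (P * ρ * P) := by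
    rw [hQ_def, sub_smul, one_smul]; noncomm_ring
  have hQQ := hρ.norm_trace_mul_projection_mul_le hU hQ hQ
  have hQP := hρ.norm_trace_mul_projection_mul_le hU hQ hP
  have hPQ := hρ.norm_trace_mul_projection_mul_le hU hP hQ
  have hPP := hρ.norm_trace_mul_projection_mul_le hU hP hP
  simp only [hp, hq, RCLike.ofReal_re, Real.mul_self_sqrt hp0, Real.mul_self_sqrt hq0]
    at hQQ hQP hPQ hPP
  have hcoef : ‖(1 - (p : 𝕜)⁻¹) * (U * (P * ρ * P)).trace‖ ≤ 1 - p := by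
    rw [norm_mul, ← RCLike.ofReal_one, ← RCLike.ofReal_inv, ← RCLike.ofReal_sub, RCLike.norm_ofReal]
    calc |1 - p⁻¹| * ‖(U * (P * ρ * P)).trace‖ ≤ |1 - p⁻¹| * p := by gcongr
      _ ≤ 1 - p := abs_one_sub_inv_mul_le hp0 (by linarith)
  have hq_le_sqrt : 1 - p ≤ √(1 - p) :=
    Real.le_sqrt_of_sq_le (pow_le_of_le_one hq0 (by linarith) two_ne_zero)
  have hcross : √(1 - p) * √p ≤ √(1 - p) :=
    mul_le_of_le_one_right (Real.sqrt_nonneg _) (Real.sqrt_le_one.mpr (by linarith))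
  rw [hsplit, mul_add, mul_add, mul_add, trace_add, trace_add, trace_add, mul_smul_comm,
    trace_smul, smul_eq_mul]
  refine (RCLike.re_le_norm _).trans <| (norm_add_le _ _).trans ?_
  linarith [norm_add₃_le (a := (U * (Q * ρ * Q)).trace) (b := (U * (Q * ρ * P)).trace)
    (c := (U * (P * ρ * Q)).trace)]

end Matrix

lemma traceDist_eq_re_trace_cfc_abs {n : Type*} [Fintype n] [DecidableEq n] {ρ σ : Matrix n n ℂ}
    (h : (ρ - σ).IsHermitian) : traceDist ρ σ = (cfc (fun x : ℝ => |x|) (ρ - σ)).trace.re / 2 := by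
  rw [← h.cfc_sqrt_conjTranspose_mul_self,
    IsHermitian.cfc_eq (posSemidef_conjTranspose_mul_self _).1]
  rfl

theorem stmt_1_general {m : Type*} [Fintype m] [DecidableEq m]
    (ρ P : Matrix m m ℂ) (δ : ℝ)
    (hρ : ρ.PosSemidef) (hρtr : ρ.trace = 1)
    (hP_herm : Pᴴ = P) (hP_idem : P * P = P)
    (h : 1 - δ ≤ (P * ρ).trace.re) :
    traceDist ρ (((P * ρ).trace)⁻¹ • (P * ρ * P)) ≤ 2 * Real.sqrt δ := by
  have hP : IsStarProjection P := ⟨hP_idem, hP_herm⟩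
  obtain ⟨p, -, hp⟩ := RCLike.nonneg_iff_exists_ofReal.mp (hP.trace_mul_nonneg hρ)
  have hherm : (ρ - ((P * ρ).trace)⁻¹ • (P * ρ * P)).IsHermitian := by
    have hPρP : (P * ρ * P).IsHermitian := by
      simpa only [hP_herm] using (hρ.mul_mul_conjTranspose_same P).1
    refine hρ.1.sub (hPρP.smul ?_)
    rw [← hp]
    simp [IsSelfAdjoint]
  obtain ⟨U, hU, hU_abs⟩ := hherm.exists_mul_eq_cfc_abs
  rw [traceDist_eq_re_trace_cfc_abs hherm, ← hU_abs]
  have hbound : (U * (ρ - ((P * ρ).trace)⁻¹ • (P * ρ * P))).trace.re ≤ 4 * √(1 - p) := by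
    have hbound' := re_trace_mul_sub_inv_smul_le hρ hρtr hP hU hp.symm
    rw [hp] at hbound'
    exact hbound'
  have hδ : √(1 - p) ≤ √δ := Real.sqrt_le_sqrt <| by
    rw [← hp] at h
    simp only [Complex.coe_algebraMap, Complex.ofReal_re] at h
    linarith
  linarith

/-- Gentle measurement (Winter): if `Tr(Pρ) ≥ 1 − δ` then the post-measurement state
`ρ' = PρP / Tr(Pρ)` satisfies `TD(ρ, ρ') ≤ 2√δ`. -/
theorem stmt_1 {m : Type*} [Fintype m] [DecidableEq m]
    (ρ P : Matrix m m ℂ) (δ : ℝ)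
    (hδ0 : 0 ≤ δ) (hδ1 : δ ≤ 1)
    (hρ : ρ.PosSemidef) (hρtr : ρ.trace = 1)
    (hP_herm : Pᴴ = P) (hP_idem : P * P = P)
    (h : 1 - δ ≤ (P * ρ).trace.re) :
    traceDist ρ (((P * ρ).trace)⁻¹ • (P * ρ * P)) ≤ 2 * Real.sqrt δ :=
  stmt_1_general ρ P δ hρ hρtr hP_herm hP_idem h
end
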